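/- arXiv:2110.01373 — 7 statements merged into one kernel-verified Lean document; each statement's English description precedes it below -/
import Mathlib

section
/- For every d ∈ (0,1), the WENO-M mapping function admits the identity g(ω) = d + (ω−d)³/(d² + (1−2d)ω) near ω = d, and consequently its first and second derivatives vanish at ω = d, g′(d) = g″(d) = 0, while its third derivative satisfies g‴(d) = 6/(d(1−d)) ≠ 0; i.e., ω = d is a critical point of order exactly n = 2. -/
/-!
The numerator factors as `ω (d + d² − 3dω + ω²) = d D(ω) + (ω − d)³` with
`D(ω) = d² + (1 − 2d) ω`, so near `ω = d`, where `D(d) = d (1 − d) > 0`, the map is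
`d + (ω − d)³ k(ω)` with `k = 1/D` smooth. By the Leibniz rule, only terms in which exactly
three derivatives fall on `(ω − d)³` survive at `ω = d`: the derivatives of order `< 3`
vanish and the third one is `3! k(d) = 6 / (d (1 − d))`.
-/

/-- The WENO-M mapping function of Henrick et al. -/
noncomputable def gM (d ω : ℝ) : ℝ :=
  ω * (d + d ^ 2 - 3 * d * ω + ω ^ 2) / (d ^ 2 + (1 - 2 * d) * ω)

open Filter Topology Nat

section
variable {𝕜 : Type*} [NontriviallyNormedField 𝕜]

theorem iteratedDeriv_pow_sub_const_self (a : 𝕜) (i m : ℕ) :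
    iteratedDeriv i (fun x => (x - a) ^ m) a = if i = m then (m ! : 𝕜) else 0 := by
  rw [iteratedDeriv_comp_sub_const i (· ^ m) a]
  simp only [sub_self, iteratedDeriv_fun_pow_zero, Nat.cast_ite, Nat.cast_zero]

theorem iteratedDeriv_pow_sub_const_mul {k : 𝕜 → 𝕜} {a : 𝕜} {n : ℕ} (m : ℕ)
    (hk : ContDiffAt 𝕜 n k a) :
    iteratedDeriv n (fun x => (x - a) ^ m * k x) a =
      if m ≤ n then n.choose m * m ! * iteratedDeriv (n - m) k a else 0 := by
  rw [iteratedDeriv_fun_mul (by fun_prop) hk]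
  simp only [iteratedDeriv_pow_sub_const_self, mul_ite, ite_mul, mul_zero, zero_mul]
  rw [Finset.sum_ite_eq' (Finset.range (n + 1)) m]
  simp

end

theorem gM_eq_add_pow_three_div {d ω : ℝ} (hω : d ^ 2 + (1 - 2 * d) * ω ≠ 0) :
    gM d ω = d + (ω - d) ^ 3 / (d ^ 2 + (1 - 2 * d) * ω) := by
  rw [gM, add_div' _ _ _ hω]
  ring

/-- For every `d ∈ (0,1)`, the WENO-M mapping admits the identity
`g(ω) = d + (ω−d)³/(d² + (1−2d)ω)` near `ω = d`; consequently `g′(d) = g″(d) = 0`,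
while `g‴(d) = 6/(d(1−d)) ≠ 0`, i.e. `ω = d` is a critical point of order exactly `2`. -/
theorem wenoM_critical_point_order_two (d : ℝ) (hd : d ∈ Set.Ioo (0 : ℝ) 1) :
    (∀ᶠ ω in nhds d, gM d ω = d + (ω - d) ^ 3 / (d ^ 2 + (1 - 2 * d) * ω)) ∧
    iteratedDeriv 1 (gM d) d = 0 ∧
    iteratedDeriv 2 (gM d) d = 0 ∧
    iteratedDeriv 3 (gM d) d = 6 / (d * (1 - d)) ∧
    (6 : ℝ) / (d * (1 - d)) ≠ 0 := by
  obtain ⟨hd0, hd1⟩ := hd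
  have hdd : d * (1 - d) ≠ 0 := (mul_pos hd0 (sub_pos.2 hd1)).ne'
  set D : ℝ → ℝ := fun ω => d ^ 2 + (1 - 2 * d) * ω
  have hDd : D d = d * (1 - d) := by ring
  have hnear : gM d =ᶠ[𝓝 d] fun ω => d + (ω - d) ^ 3 / D ω :=
    ((by fun_prop : Continuous D).continuousAt.eventually_ne (hDd ▸ hdd)).mono
      fun ω => gM_eq_add_pow_three_div
  have hk (n : ℕ) : ContDiffAt ℝ n (fun ω => (D ω)⁻¹) d := by
    fun_prop (disch := exact hDd ▸ hdd)
  have hderiv (n : ℕ) (hn : 0 < n) : iteratedDeriv n (gM d) d =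
      if 3 ≤ n then n.choose 3 * 3 ! * iteratedDeriv (n - 3) (fun ω => (D ω)⁻¹) d else 0 := by
    simp_rw [hnear.iteratedDeriv_eq, div_eq_mul_inv]
    rw [iteratedDeriv_const_add hn, iteratedDeriv_pow_sub_const_mul 3 (hk n)]
  refine ⟨hnear, ?_, ?_, ?_, by positivity⟩
  · simpa using hderiv 1 one_pos
  · simpa using hderiv 2 two_pos
  · rw [hderiv 3 three_pos]
    simp [Nat.factorial, hDd, div_eq_mul_inv, mul_comm]
end

section
/- For every d ∈ (0,1), the WENO-M mapping function is monotonically non-decreasing on [0,1]: for all 0 ≤ ω₁ ≤ ω₂ ≤ 1, g(ω₁) ≤ g(ω₂). -/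
lemma gM_denom_pos {d x : ℝ} (hd₀ : d ≠ 0) (hd₁ : d ≠ 1) (hx : x ∈ Set.Icc (0 : ℝ) 1) :
    0 < d ^ 2 + (1 - 2 * d) * x := by
  have hconvex : d ^ 2 + (1 - 2 * d) * x = (1 - x) * d ^ 2 + x * (1 - d) ^ 2 := by ring
  have h₀ : 0 < d ^ 2 := sq_pos_of_ne_zero hd₀
  have h₁ : 0 < (1 - d) ^ 2 := sq_pos_of_ne_zero (sub_ne_zero.mpr hd₁.symm)
  rw [hconvex]
  rcases hx.1.eq_or_lt with rfl | hx₀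
  · simpa using h₀
  · exact add_pos_of_nonneg_of_pos (mul_nonneg (sub_nonneg.mpr hx.2) h₀.le) (mul_pos hx₀ h₁)

lemma gM_deriv_factor_nonneg {d x : ℝ} (hd : d ∈ Set.Icc (0 : ℝ) 1)
    (hx : x ∈ Set.Icc (0 : ℝ) 1) : 0 ≤ (2 - 4 * d) * x + d + d ^ 2 := by
  have hconvex :
      (2 - 4 * d) * x + d + d ^ 2 = (1 - x) * (d + d ^ 2) + x * ((1 - d) * (2 - d)) := by
    ring
  have h₀ : 0 ≤ d + d ^ 2 := add_nonneg hd.1 (sq_nonneg d)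
  have h₁ : 0 ≤ (1 - d) * (2 - d) := mul_nonneg (by linarith [hd.2]) (by linarith [hd.2])
  rw [hconvex]
  exact add_nonneg (mul_nonneg (sub_nonneg.mpr hx.2) h₀) (mul_nonneg hx.1 h₁)

lemma hasDerivAt_gM {d x : ℝ} (hx : d ^ 2 + (1 - 2 * d) * x ≠ 0) :
    HasDerivAt (gM d)
      ((x - d) ^ 2 * ((2 - 4 * d) * x + d + d ^ 2) / (d ^ 2 + (1 - 2 * d) * x) ^ 2) x := by
  have hnum : HasDerivAt (fun ω : ℝ => ω * (d + d ^ 2 - 3 * d * ω + ω ^ 2))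
      (1 * (d + d ^ 2 - 3 * d * x + x ^ 2) + x * (-(3 * d * 1) + 2 * x)) x :=
    (hasDerivAt_id x).mul ((((hasDerivAt_id x).const_mul (3 * d)).const_sub _).add
      (by simpa using hasDerivAt_pow 2 x))
  have hden : HasDerivAt (fun ω : ℝ => d ^ 2 + (1 - 2 * d) * ω) ((1 - 2 * d) * 1) x :=
    ((hasDerivAt_id x).const_mul _).const_add _
  exact (hnum.div hden hx).congr_deriv (by ring)

/-- For every `d ∈ (0,1)`, the WENO-M mapping function is monotonically non-decreasing
on `[0,1]`: for all `0 ≤ ω₁ ≤ ω₂ ≤ 1`, `g(ω₁) ≤ g(ω₂)`. -/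
theorem wenoM_monotone (d : ℝ) (hd : d ∈ Set.Ioo (0 : ℝ) 1) :
    MonotoneOn (gM d) (Set.Icc (0 : ℝ) 1) := by
  have hderiv : ∀ x ∈ Set.Icc (0 : ℝ) 1, HasDerivAt (gM d)
      ((x - d) ^ 2 * ((2 - 4 * d) * x + d + d ^ 2) / (d ^ 2 + (1 - 2 * d) * x) ^ 2) x :=
    fun x hx ↦ hasDerivAt_gM (gM_denom_pos hd.1.ne' hd.2.ne hx).ne'
  refine monotoneOn_of_hasDerivWithinAt_nonneg (convex_Icc 0 1)
    (fun x hx ↦ (hderiv x hx).continuousAt.continuousWithinAt)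
    (fun x hx ↦ (hderiv x (interior_subset hx)).hasDerivWithinAt) fun x hx ↦ ?_
  exact div_nonneg (mul_nonneg (sq_nonneg _)
    (gM_deriv_factor_nonneg (Set.Ioo_subset_Icc_self hd) (interior_subset hx))) (sq_nonneg _)
end

section
/- For every d ∈ (0,1), every A > 0 and every positive even integer k, the WENO-IM(k,A) mapping function is monotonically non-decreasing on [0,1]: for all 0 ≤ ω₁ ≤ ω₂ ≤ 1, g(ω₁) ≤ g(ω₂). -/
/-- The WENO-IM(k,A) mapping function of Feng et al. -/
noncomputable def gIM (d A : ℝ) (k : ℕ) (ω : ℝ) : ℝ :=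
  d + (ω - d) ^ (k + 1) * A / ((ω - d) ^ k * A + ω * (1 - ω))

/-!
Write `u = ω - d` and `D = u ^ k A + ω (1 - ω)`. By the quotient rule
`g' D ^ 2 = A u ^ k (u ^ k A + (k + 1) ω (1 - ω) - u (1 - 2ω))`, and
`(k + 1) ω (1 - ω) - u (1 - 2ω) = k ω (1 - ω) + u ^ 2 + d (1 - d)`, which is nonnegative on
`[0,1]`; so is `u ^ k` since `k` is even. For `d ∈ (0,1)` the denominator `D` does not vanish on
`[0,1]`, so `g` is differentiable on the closed interval with nonnegative derivative.
-/

open Set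

noncomputable def gIMDeriv (d A : ℝ) (k : ℕ) (ω : ℝ) : ℝ :=
  A * (ω - d) ^ k * ((ω - d) ^ k * A + k * (ω * (1 - ω)) + (ω - d) ^ 2 + d * (1 - d)) /
    ((ω - d) ^ k * A + ω * (1 - ω)) ^ 2

theorem gIM_denom_pos {d A ω : ℝ} {k : ℕ} (hd : d ∈ Ioo (0 : ℝ) 1) (hA : 0 < A) (hk : Even k)
    (hω : ω ∈ Icc (0 : ℝ) 1) : 0 < (ω - d) ^ k * A + ω * (1 - ω) := by
  have hu : 0 ≤ (ω - d) ^ k * A := mul_nonneg (hk.pow_nonneg _) hA.le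
  have hs : 0 ≤ ω * (1 - ω) := mul_nonneg hω.1 (by linarith [hω.2])
  rcases eq_or_ne ω d with rfl | hne
  · linarith [mul_pos hd.1 (sub_pos.2 hd.2)]
  · linarith [mul_pos (hk.pow_pos (sub_ne_zero.mpr hne)) hA]

theorem hasDerivAt_gIM {d A ω : ℝ} {k : ℕ} (hD : (ω - d) ^ k * A + ω * (1 - ω) ≠ 0) :
    HasDerivAt (gIM d A k) (gIMDeriv d A k ω) ω := by
  have hu : ∀ n : ℕ, HasDerivAt (fun x : ℝ => (x - d) ^ n) (n * (ω - d) ^ (n - 1) * 1) ω :=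
    fun n => ((hasDerivAt_id ω).sub_const d).pow n
  have hnum := (hu (k + 1)).mul_const A
  have hden : HasDerivAt (fun x : ℝ => (x - d) ^ k * A + x * (1 - x))
      (k * (ω - d) ^ (k - 1) * 1 * A + (1 * (1 - ω) + ω * (0 - 1))) ω :=
    ((hu k).mul_const A).add
      ((hasDerivAt_id' ω).mul ((hasDerivAt_const ω 1).sub (hasDerivAt_id' ω)))
  refine ((hnum.div hden hD).const_add d).congr_deriv ?_
  rw [gIMDeriv]
  rcases k with _ | k
  · ring
  · push_cast; ring

theorem gIMDeriv_nonneg {d A ω : ℝ} {k : ℕ} (hd : d ∈ Icc (0 : ℝ) 1) (hA : 0 ≤ A)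
    (hk : Even k) (hω : ω ∈ Icc (0 : ℝ) 1) : 0 ≤ gIMDeriv d A k ω := by
  have hu : 0 ≤ (ω - d) ^ k := hk.pow_nonneg _
  have hs : 0 ≤ ω * (1 - ω) := mul_nonneg hω.1 (by linarith [hω.2])
  have hdd : 0 ≤ d * (1 - d) := mul_nonneg hd.1 (by linarith [hd.2])
  rw [gIMDeriv]
  positivity

theorem wenoIM_monotone_general (d A : ℝ) (hd : d ∈ Set.Ioo (0 : ℝ) 1) (hA : 0 < A)
    (k : ℕ) (hke : Even k) :
    MonotoneOn (gIM d A k) (Set.Icc (0 : ℝ) 1) := by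
  have hderiv : ∀ ω ∈ Icc (0 : ℝ) 1, HasDerivAt (gIM d A k) (gIMDeriv d A k ω) ω :=
    fun ω hω => hasDerivAt_gIM (gIM_denom_pos hd hA hke hω).ne'
  refine monotoneOn_of_hasDerivWithinAt_nonneg (convex_Icc 0 1)
    (fun ω hω => (hderiv ω hω).continuousAt.continuousWithinAt)
    (fun ω hω => (hderiv ω (interior_subset hω)).hasDerivWithinAt) fun ω hω => ?_
  exact gIMDeriv_nonneg (Ioo_subset_Icc_self hd) hA.le hke (interior_subset hω)

/-- For every `d ∈ (0,1)`, `A > 0` and positive even integer `k`, the WENO-IM(k,A)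
mapping function is monotonically non-decreasing on `[0,1]`. -/
theorem wenoIM_monotone (d A : ℝ) (hd : d ∈ Set.Ioo (0 : ℝ) 1) (hA : 0 < A)
    (k : ℕ) (hk : 0 < k) (hke : Even k) :
    MonotoneOn (gIM d A k) (Set.Icc (0 : ℝ) 1) :=
  wenoIM_monotone_general d A hd hA k hke
end

section
/- For every d ∈ (0,1), the WENO-PPM5 mapping function is 4 times differentiable at ω = d with g⁽ʲ⁾(d) = 0 for all 1 ≤ j ≤ 4 (the one-sided derivatives of orders 1 through 4 of both branches vanish at d), while the one-sided fifth derivatives at d equal 5!/d⁴ from the left and 5!/(1−d)⁴ from the right, both nonzero. -/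
/-!
Both branches are `d + c (ω - d)⁵`, with `c = 1/d⁴` on the left and `c = 1/(1-d)⁴` on the
right, so `g` is `d` plus a translate of the split power `x ↦ (x ≤ 0 ? a xⁿ : b xⁿ)` with `n = 5`.
The derivative of the split power of degree `n + 2` is `n + 2` times the split power of degree
`n + 1` with the same coefficients `a, b`; hence the split power of degree `n + 1` is `Cⁿ` and
its derivatives of order at most `n` vanish at `0`.
-/

/-- The left branch (ω ≤ d) of the WENO-PPM5 mapping function. -/
noncomputable def gPPM5L (d ω : ℝ) : ℝ := d * (1 + (ω / d - 1) ^ 5)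

/-- The right branch (ω > d) of the WENO-PPM5 mapping function. -/
noncomputable def gPPM5R (d ω : ℝ) : ℝ := d + (ω - d) ^ 5 / (d - 1) ^ 4

/-- The WENO-PPM5 mapping function. -/
noncomputable def gPPM5 (d ω : ℝ) : ℝ := if ω ≤ d then gPPM5L d ω else gPPM5R d ω

open Set

noncomputable def splitPow (a b : ℝ) (n : ℕ) (x : ℝ) : ℝ :=
  if x ≤ 0 then a * x ^ n else b * x ^ n

section SplitPow

variable (a b : ℝ)

lemma splitPow_zero {n : ℕ} (hn : n ≠ 0) : splitPow a b n 0 = 0 := by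
  simp [splitPow, hn]

lemma continuous_splitPow {n : ℕ} (hn : n ≠ 0) : Continuous (splitPow a b n) :=
  Continuous.if_le (by fun_prop) (by fun_prop) continuous_id continuous_const
    fun x hx => by simp [hx, hn]

lemma hasDerivAt_splitPow (n : ℕ) (x : ℝ) :
    HasDerivAt (splitPow a b (n + 2)) ((n + 2) * splitPow a b (n + 1) x) x := by
  have hLeft : ∀ x ≤ 0, HasDerivWithinAt (splitPow a b (n + 2))
      ((n + 2) * splitPow a b (n + 1) x) (Iic 0) x := fun x hx => by
    have h := ((hasDerivAt_pow (n + 2) x).const_mul a).hasDerivWithinAt (s := Iic 0)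
    refine (h.congr (fun y hy => if_pos hy) (if_pos hx)).congr_deriv ?_
    simp only [splitPow, if_pos hx]
    push_cast
    ring
  have hRight : ∀ x, 0 ≤ x → HasDerivWithinAt (splitPow a b (n + 2))
      ((n + 2) * splitPow a b (n + 1) x) (Ici 0) x := fun x hx => by
    have h := ((hasDerivAt_pow (n + 2) x).const_mul b).hasDerivWithinAt (s := Ici 0)
    have hEqOn : ∀ y ∈ Ici (0 : ℝ), splitPow a b (n + 2) y = b * y ^ (n + 2) := fun y hy => by
      rcases (mem_Ici.mp hy).eq_or_lt with rfl | hy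
      · simp [splitPow_zero]
      · simp [splitPow, not_le.mpr hy]
    refine (h.congr_of_mem hEqOn hx).congr_deriv ?_
    rcases hx.eq_or_lt with rfl | hx
    · simp [splitPow_zero]
    · simp only [splitPow, if_neg (not_le.mpr hx)]
      push_cast
      ring
  rcases lt_trichotomy x 0 with hx | rfl | hx
  · exact (hLeft x hx.le).hasDerivAt (Iic_mem_nhds hx)
  · simpa only [Iic_union_Ici, hasDerivWithinAt_univ] using
      (hLeft 0 le_rfl).union (hRight 0 le_rfl)
  · exact (hRight x hx.le).hasDerivAt (Ici_mem_nhds hx)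

lemma deriv_splitPow (n : ℕ) :
    deriv (splitPow a b (n + 2)) = fun x => (n + 2) * splitPow a b (n + 1) x :=
  funext fun x => (hasDerivAt_splitPow a b n x).deriv

lemma contDiff_splitPow (n : ℕ) : ContDiff ℝ n (splitPow a b (n + 1)) := by
  induction n with
  | zero => exact contDiff_zero.mpr (continuous_splitPow a b one_ne_zero)
  | succ n ih =>
    rw [Nat.cast_succ, contDiff_succ_iff_deriv, deriv_splitPow]
    exact ⟨fun x => (hasDerivAt_splitPow a b n x).differentiableAt, by simp,
      contDiff_const.mul ih⟩

lemma iteratedDeriv_splitPow {n k : ℕ} (hk : k < n) :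
    iteratedDeriv k (splitPow a b n) = fun x => n.descFactorial k * splitPow a b (n - k) x := by
  induction k with
  | zero => simp
  | succ k ih =>
    obtain ⟨m, hm⟩ : ∃ m, n - k = m + 2 := ⟨n - k - 2, by omega⟩
    rw [iteratedDeriv_succ, ih (by omega), hm, deriv_const_mul_field', deriv_splitPow,
      Nat.descFactorial_succ, hm, show n - (k + 1) = m + 1 by omega]
    ext x
    push_cast
    ring

lemma iteratedDeriv_splitPow_zero {n k : ℕ} (hk : k < n) :
    iteratedDeriv k (splitPow a b n) 0 = 0 := by
  simp only [iteratedDeriv_splitPow a b hk, splitPow_zero a b (Nat.sub_ne_zero_of_lt hk), mul_zero]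

end SplitPow

lemma iteratedDeriv_const_add_comp_sub_const (f : ℝ → ℝ) (c d : ℝ) {k : ℕ} (hk : 0 < k) :
    iteratedDeriv k (fun ω => c + f (ω - d)) d = iteratedDeriv k f 0 := by
  simp only [iteratedDeriv_const_add hk, iteratedDeriv_comp_sub_const, sub_self]

lemma iteratedDeriv_const_add_mul_sub_pow (c e d : ℝ) (n : ℕ) {k : ℕ} (hk : 0 < k) :
    iteratedDeriv k (fun ω => c + e * (ω - d) ^ n) d = if k = n then e * n.factorial else 0 := by
  rw [iteratedDeriv_const_add_comp_sub_const (fun x => e * x ^ n) c d hk,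
    iteratedDeriv_const_mul_field, iteratedDeriv_fun_pow_zero]
  split_ifs <;> simp

lemma gPPM5L_eq {d : ℝ} (hd : d ≠ 0) : gPPM5L d = fun ω => d + (d ^ 4)⁻¹ * (ω - d) ^ 5 := by
  ext ω
  rw [gPPM5L]
  field_simp

lemma gPPM5R_eq (d : ℝ) : gPPM5R d = fun ω => d + ((1 - d) ^ 4)⁻¹ * (ω - d) ^ 5 := by
  ext ω
  rw [gPPM5R]
  ring

lemma gPPM5_eq {d : ℝ} (hd : d ≠ 0) :
    gPPM5 d = fun ω => d + splitPow (d ^ 4)⁻¹ ((1 - d) ^ 4)⁻¹ 5 (ω - d) := by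
  ext ω
  simp only [gPPM5, splitPow, sub_nonpos, gPPM5L_eq hd, gPPM5R_eq]
  split_ifs <;> rfl

/-- For every `d ∈ (0,1)`, the WENO-PPM5 mapping is `4` times differentiable at `ω = d`
with `g⁽ʲ⁾(d) = 0` for `1 ≤ j ≤ 4` (the one-sided derivatives of orders `1` through `4`
of both branches vanish at `d`), while the one-sided fifth derivatives at `d` equal
`5!/d⁴` from the left and `5!/(1−d)⁴` from the right, both nonzero. -/
theorem wenoPPM5_derivatives (d : ℝ) (hd : d ∈ Set.Ioo (0 : ℝ) 1) :
    ContDiffAt ℝ 4 (gPPM5 d) d ∧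
    (∀ j : ℕ, 1 ≤ j → j ≤ 4 →
      iteratedDeriv j (gPPM5 d) d = 0 ∧
      iteratedDeriv j (gPPM5L d) d = 0 ∧ iteratedDeriv j (gPPM5R d) d = 0) ∧
    iteratedDeriv 5 (gPPM5L d) d = (Nat.factorial 5 : ℝ) / d ^ 4 ∧
    iteratedDeriv 5 (gPPM5R d) d = (Nat.factorial 5 : ℝ) / (1 - d) ^ 4 ∧
    (Nat.factorial 5 : ℝ) / d ^ 4 ≠ 0 ∧ (Nat.factorial 5 : ℝ) / (1 - d) ^ 4 ≠ 0 := by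
  obtain ⟨hd0, hd1⟩ := hd
  have hL : ∀ k, 0 < k →
      iteratedDeriv k (gPPM5L d) d = if k = 5 then (d ^ 4)⁻¹ * (Nat.factorial 5 : ℝ) else 0 :=
    fun k hk => by rw [gPPM5L_eq hd0.ne', iteratedDeriv_const_add_mul_sub_pow _ _ _ _ hk]
  have hR : ∀ k, 0 < k →
      iteratedDeriv k (gPPM5R d) d = if k = 5 then ((1 - d) ^ 4)⁻¹ * (Nat.factorial 5 : ℝ) else 0 :=
    fun k hk => by rw [gPPM5R_eq, iteratedDeriv_const_add_mul_sub_pow _ _ _ _ hk]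
  refine ⟨?_, fun j hj1 hj4 => ⟨?_, ?_, ?_⟩, ?_, ?_, by positivity,
    div_ne_zero (by positivity) (pow_ne_zero _ (sub_ne_zero.mpr hd1.ne'))⟩
  · rw [gPPM5_eq hd0.ne']
    have hShift : ContDiff ℝ 4 fun ω : ℝ => ω - d := contDiff_id.sub contDiff_const
    exact (contDiff_const.add ((contDiff_splitPow _ _ 4).comp hShift)).contDiffAt
  · rw [gPPM5_eq hd0.ne', iteratedDeriv_const_add_comp_sub_const _ _ _ hj1]
    exact iteratedDeriv_splitPow_zero _ _ (by omega)
  · rw [hL j hj1, if_neg (by omega)]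
  · rw [hR j hj1, if_neg (by omega)]
  · rw [hL 5 (by norm_num), if_pos rfl, div_eq_inv_mul]
  · rw [hR 5 (by norm_num), if_pos rfl, div_eq_inv_mul]
end

section
/- For every d ∈ (0,1), the WENO-PPM5 mapping function is monotonically non-decreasing on [0,1]: for all 0 ≤ ω₁ ≤ ω₂ ≤ 1, g(ω₁) ≤ g(ω₂). -/
/-! Both branches are affine images of `t ↦ t ^ 5`, increasing since 5 is odd, and they meet
at `ω = d` with the common value `d`; gluing two increasing maps that agree at the break point
gives an increasing map. -/

theorem Monotone.ite_le {α β : Type*} [LinearOrder α] [Preorder β] {f g : α → β} {c : α}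
    (hf : Monotone f) (hg : Monotone g) (hfg : f c ≤ g c) :
    Monotone fun x => if x ≤ c then f x else g x := by
  intro x y hxy
  dsimp only
  split_ifs with hx hy hy
  · exact hf hxy
  · exact (hf hx).trans (hfg.trans (hg (le_of_not_ge hy)))
  · exact absurd (hy.trans' hxy) hx
  · exact hg hxy

theorem monotone_pow_five : Monotone fun t : ℝ => t ^ 5 :=
  (Odd.strictMono_pow (by decide)).monotone

theorem monotone_gPPM5L {d : ℝ} (hd : 0 ≤ d) : Monotone (gPPM5L d) := by
  intro x y hxy
  have hpow : (x / d - 1) ^ 5 ≤ (y / d - 1) ^ 5 := by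
    apply monotone_pow_five
    gcongr
  unfold gPPM5L
  gcongr

theorem monotone_gPPM5R (d : ℝ) : Monotone (gPPM5R d) := by
  intro x y hxy
  have hpow : (x - d) ^ 5 ≤ (y - d) ^ 5 := monotone_pow_five (sub_le_sub_right hxy d)
  unfold gPPM5R
  gcongr

theorem gPPM5L_self {d : ℝ} (hd : d ≠ 0) : gPPM5L d d = d := by
  simp [gPPM5L, div_self hd]

theorem gPPM5R_self (d : ℝ) : gPPM5R d d = d := by
  simp [gPPM5R]

theorem monotone_gPPM5 {d : ℝ} (hd : 0 < d) : Monotone (gPPM5 d) :=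
  (monotone_gPPM5L hd.le).ite_le (monotone_gPPM5R d)
    (by rw [gPPM5L_self hd.ne', gPPM5R_self])

/-- For every `d ∈ (0,1)`, the WENO-PPM5 mapping function is monotonically
non-decreasing on `[0,1]`. -/
theorem wenoPPM5_monotone (d : ℝ) (hd : d ∈ Set.Ioo (0 : ℝ) 1) :
    MonotoneOn (gPPM5 d) (Set.Icc (0 : ℝ) 1) :=
  (monotone_gPPM5 hd.1).monotoneOn _
end

section
/- For every d ∈ (0,1) such that Q(d) ≠ 0, the WENO-RM(260) mapping function satisfies g(d) = d, is 6 times differentiable at ω = d with g⁽ʲ⁾(d) = 0 for all 1 ≤ j ≤ 6, and g⁽⁷⁾(d) = 7!/Q(d) ≠ 0; i.e., ω = d is a critical point of order exactly 6. -/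
/-- The cubic denominator of the WENO-RM(260) mapping function, with
`a₀ = d⁶`, `a₁ = −7d⁵`, `a₂ = 21d⁴`, `a₃ = (1−d)⁶ − a₀ − a₁ − a₂`. -/
noncomputable def QRM (d ω : ℝ) : ℝ :=
  d ^ 6 + (-7 * d ^ 5) * ω + (21 * d ^ 4) * ω ^ 2 +
    ((1 - d) ^ 6 - d ^ 6 - (-7 * d ^ 5) - 21 * d ^ 4) * ω ^ 3

/-- The WENO-RM(260) mapping function. -/
noncomputable def gRM (d ω : ℝ) : ℝ := d + (ω - d) ^ 7 / QRM d ω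

/-!
Near `ω = d` write `g(ω) = d + (ω - d)⁷ · Q(ω)⁻¹`, where `Q⁻¹` is smooth at `d` because `Q(d) ≠ 0`.
By the Leibniz rule, the `j`-th derivative of `(ω - d)⁷ · h(ω)` at `d` only sees the term where
all `7` derivatives fall on the factor `(ω - d)⁷`, so it vanishes for `j < 7` and equals `7! · h(d)`
for `j = 7`.
-/

open scoped Nat

section SubPowMul

variable {𝕜 : Type*} [NontriviallyNormedField 𝕜] [CharZero 𝕜]

theorem iteratedDeriv_sub_pow_at_self (a : 𝕜) (n k : ℕ) :
    iteratedDeriv k (fun x => (x - a) ^ n) a = if k = n then (n ! : 𝕜) else 0 := by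
  rw [iteratedDeriv_comp_sub_const k (· ^ n) a]
  simp only [sub_self, iteratedDeriv_fun_pow_zero]
  split_ifs <;> simp

theorem iteratedDeriv_sub_pow_mul_at_self {f : 𝕜 → 𝕜} {a : 𝕜} {k : ℕ}
    (hf : ContDiffAt 𝕜 k f a) (n : ℕ) :
    iteratedDeriv k (fun x => (x - a) ^ n * f x) a =
      if n ≤ k then (k.choose n * n ! : 𝕜) * iteratedDeriv (k - n) f a else 0 := by
  have hpow : ContDiffAt 𝕜 k (fun x => (x - a) ^ n) a := by fun_prop
  rw [iteratedDeriv_fun_mul hpow hf]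
  simp only [iteratedDeriv_sub_pow_at_self]
  split_ifs with hnk
  · rw [Finset.sum_eq_single n (fun i _ hin => by simp [hin]) (fun h => by simp_all)]
    simp
  · exact Finset.sum_eq_zero fun i hi => by
      have : i ≠ n := by rw [Finset.mem_range] at hi; omega
      simp [this]

end SubPowMul

theorem contDiff_QRM (d : ℝ) {n : WithTop ℕ∞} : ContDiff ℝ n (QRM d) := by
  unfold QRM
  fun_prop

theorem gRM_eq (d : ℝ) : gRM d = fun ω => d + (ω - d) ^ 7 * (QRM d ω)⁻¹ := by
  funext ω
  rw [gRM, div_eq_mul_inv]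

theorem wenoRM_critical_point_order_six_general (d : ℝ)
    (hQ : QRM d d ≠ 0) :
    gRM d d = d ∧
    ContDiffAt ℝ 6 (gRM d) d ∧
    (∀ j : ℕ, 1 ≤ j → j ≤ 6 → iteratedDeriv j (gRM d) d = 0) ∧
    iteratedDeriv 7 (gRM d) d = (Nat.factorial 7 : ℝ) / QRM d d ∧
    (Nat.factorial 7 : ℝ) / QRM d d ≠ 0 := by
  have hinv {n : WithTop ℕ∞} : ContDiffAt ℝ n (fun ω => (QRM d ω)⁻¹) d :=
    (contDiff_QRM d).contDiffAt.inv hQ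
  have hderiv (j : ℕ) (hj : 1 ≤ j) : iteratedDeriv j (gRM d) d =
      if 7 ≤ j then (j.choose 7 * 7 ! : ℝ) * iteratedDeriv (j - 7) (fun ω => (QRM d ω)⁻¹) d
      else 0 := by
    rw [gRM_eq, iteratedDeriv_const_add hj, iteratedDeriv_sub_pow_mul_at_self hinv]
  refine ⟨by simp [gRM], by rw [gRM_eq]; fun_prop, fun j hj hj6 => ?_, ?_, by positivity⟩
  · rw [hderiv j hj, if_neg (by omega)]
  · rw [hderiv 7 (by norm_num)]
    simp [div_eq_mul_inv]

/-- For every `d ∈ (0,1)` with `Q(d) ≠ 0`, the WENO-RM(260) mapping satisfies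
`g(d) = d`, is `6` times differentiable at `ω = d` with `g⁽ʲ⁾(d) = 0` for all
`1 ≤ j ≤ 6`, and `g⁽⁷⁾(d) = 7!/Q(d) ≠ 0`; i.e. `ω = d` is a critical point of
order exactly `6`. -/
theorem wenoRM_critical_point_order_six (d : ℝ) (hd : d ∈ Set.Ioo (0 : ℝ) 1)
    (hQ : QRM d d ≠ 0) :
    gRM d d = d ∧
    ContDiffAt ℝ 6 (gRM d) d ∧
    (∀ j : ℕ, 1 ≤ j → j ≤ 6 → iteratedDeriv j (gRM d) d = 0) ∧
    iteratedDeriv 7 (gRM d) d = (Nat.factorial 7 : ℝ) / QRM d d ∧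
    (Nat.factorial 7 : ℝ) / QRM d d ≠ 0 :=
  wenoRM_critical_point_order_six_general d hQ
end

section
/- For every δ > 0, A > 0 and integer k ≥ 0, the function sgm(·, δ, A, k) : ℝ → ℝ is odd (sgm(−x) = −sgm(x)), satisfies sgm(0) = 0 and |sgm(x)| ≤ 1 for all x ∈ ℝ with sgm(x) = 1 for x ≥ δ and sgm(x) = −1 for x ≤ −δ, is continuous on ℝ, and is monotonically non-decreasing on ℝ. -/
/-- The smoothed sign function used in the WENO-ACM scheme. -/
noncomputable def sgm (δ A : ℝ) (k : ℕ) (x : ℝ) : ℝ :=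
  if δ ≤ |x| then x / |x| else x / ((A * (δ ^ 2 - x ^ 2)) ^ (k + 3) + |x|)

namespace SgmAux

/-- Smooth nonneg numerator part of the denominator. -/
noncomputable def P (δ A : ℝ) (k : ℕ) (x : ℝ) : ℝ :=
  (max 0 (A * (δ ^ 2 - x ^ 2))) ^ (k + 3)

/-- Global denominator. -/
noncomputable def D (δ A : ℝ) (k : ℕ) (x : ℝ) : ℝ := P δ A k x + |x|

lemma P_nonneg (δ A : ℝ) (k : ℕ) (x : ℝ) : 0 ≤ P δ A k x := by
  unfold P; positivity

lemma P_even (δ A : ℝ) (k : ℕ) (x : ℝ) : P δ A k (-x) = P δ A k x := by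
  simp [P]

lemma D_even (δ A : ℝ) (k : ℕ) (x : ℝ) : D δ A k (-x) = D δ A k x := by
  simp [D, P]

lemma D_pos (δ A : ℝ) (k : ℕ) (hδ : 0 < δ) (hA : 0 < A) (x : ℝ) :
    0 < D δ A k x := by
  rcases eq_or_ne x 0 with rfl | hx
  · have h1 : max 0 (A * (δ ^ 2 - (0:ℝ) ^ 2)) = A * δ ^ 2 := by
      rw [max_eq_right (by nlinarith : (0:ℝ) ≤ A * (δ ^ 2 - 0 ^ 2))]; ring
    have : 0 < P δ A k 0 := by
      rw [P, h1]; positivity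
    simp only [D, abs_zero, add_zero]
    exact this
  · have h1 : 0 < |x| := abs_pos.mpr hx
    have := P_nonneg δ A k x
    unfold D; linarith

lemma sgm_eq (δ A : ℝ) (k : ℕ) (hδ : 0 < δ) (hA : 0 < A) (x : ℝ) :
    sgm δ A k x = x / D δ A k x := by
  unfold sgm D P
  split_ifs with h
  · have hx2 : δ ^ 2 ≤ x ^ 2 := by
      have := sq_abs x
      nlinarith [abs_nonneg x]
    have hmax : max 0 (A * (δ ^ 2 - x ^ 2)) = 0 := by
      rw [max_eq_left]; nlinarith
    rw [hmax, zero_pow (by omega), zero_add]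
  · have hx2 : x ^ 2 < δ ^ 2 := by
      push_neg at h
      have := sq_abs x
      nlinarith [abs_nonneg x]
    have hmax : max 0 (A * (δ ^ 2 - x ^ 2)) = A * (δ ^ 2 - x ^ 2) := by
      rw [max_eq_right (by nlinarith : (0:ℝ) ≤ A * (δ ^ 2 - x ^ 2))]
    rw [hmax]

lemma P_anti (δ A : ℝ) (k : ℕ) (hA : 0 < A) {x y : ℝ} (h : |x| ≤ |y|) :
    P δ A k y ≤ P δ A k x := by
  unfold P
  apply pow_le_pow_left₀ (le_max_left _ _)
  apply max_le_max le_rfl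
  have : x ^ 2 ≤ y ^ 2 := by
    rw [← sq_abs x, ← sq_abs y]
    exact pow_le_pow_left₀ (abs_nonneg x) h 2
  nlinarith

end SgmAux

open SgmAux in
/-- For every `δ > 0`, `A > 0` and integer `k ≥ 0`, the function `sgm(·, δ, A, k)` is
odd, vanishes at `0`, satisfies `|sgm(x)| ≤ 1` with `sgm(x) = 1` for `x ≥ δ` and
`sgm(x) = −1` for `x ≤ −δ`, is continuous on `ℝ`, and is monotonically
non-decreasing on `ℝ`. -/
theorem sgm_properties (δ A : ℝ) (k : ℕ) (hδ : 0 < δ) (hA : 0 < A) :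
    (∀ x : ℝ, sgm δ A k (-x) = - sgm δ A k x) ∧
    sgm δ A k 0 = 0 ∧
    (∀ x : ℝ, |sgm δ A k x| ≤ 1) ∧
    (∀ x : ℝ, δ ≤ x → sgm δ A k x = 1) ∧
    (∀ x : ℝ, x ≤ -δ → sgm δ A k x = -1) ∧
    Continuous (sgm δ A k) ∧
    Monotone (sgm δ A k) := by
  have hD := D_pos δ A k hδ hA
  have heq := sgm_eq δ A k hδ hA
  refine ⟨?_, ?_, ?_, ?_, ?_, ?_, ?_⟩
  · intro x
    rw [heq, heq, D_even, neg_div]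
  · rw [heq, zero_div]
  · intro x
    rw [heq, abs_div, abs_of_pos (hD x), div_le_one (hD x)]
    have := P_nonneg δ A k x
    unfold D; linarith
  · intro x hx
    have hx0 : 0 < x := lt_of_lt_of_le hδ hx
    have hx2 : δ ^ 2 ≤ x ^ 2 := by nlinarith
    have hmax : max 0 (A * (δ ^ 2 - x ^ 2)) = 0 := by
      rw [max_eq_left]; nlinarith
    rw [heq]
    unfold D P
    rw [hmax, zero_pow (by omega), zero_add, abs_of_pos hx0, div_self hx0.ne']
  · intro x hx
    have hx0 : x < 0 := lt_of_le_of_lt hx (by linarith)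
    have hx2 : δ ^ 2 ≤ x ^ 2 := by nlinarith
    have hmax : max 0 (A * (δ ^ 2 - x ^ 2)) = 0 := by
      rw [max_eq_left]; nlinarith
    rw [heq]
    unfold D P
    rw [hmax, zero_pow (by omega), zero_add, abs_of_neg hx0,
      div_neg, div_self hx0.ne]
  · have : (sgm δ A k) = fun x => x / D δ A k x := funext heq
    rw [this]
    apply Continuous.div continuous_id
    · unfold D P
      fun_prop
    · intro x; exact (hD x).ne'
  · intro x y hxy
    rw [heq, heq, div_le_div_iff₀ (hD x) (hD y)]
    unfold D
    have habs : x * |y| ≤ y * |x| := by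
      rcases le_or_gt 0 x with h1 | h1
      · rw [abs_of_nonneg h1, abs_of_nonneg (h1.trans hxy)]; ring_nf; nlinarith
      · rcases le_or_gt 0 y with h2 | h2
        · have : x * |y| ≤ 0 := mul_nonpos_of_nonpos_of_nonneg h1.le (abs_nonneg y)
          have : 0 ≤ y * |x| := mul_nonneg h2 (abs_nonneg x)
          linarith [mul_nonpos_of_nonpos_of_nonneg h1.le (abs_nonneg y)]
        · rw [abs_of_neg h1, abs_of_neg h2]; ring_nf; nlinarith
    have hP : x * P δ A k y ≤ y * P δ A k x := by
      rcases le_or_gt 0 x with h1 | h1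
      · have hay : |x| ≤ |y| := by
          rw [abs_of_nonneg h1, abs_of_nonneg (h1.trans hxy)]; exact hxy
        calc x * P δ A k y ≤ x * P δ A k x :=
              mul_le_mul_of_nonneg_left (P_anti δ A k hA hay) h1
          _ ≤ y * P δ A k x := mul_le_mul_of_nonneg_right hxy (P_nonneg _ _ _ _)
      · rcases le_or_gt 0 y with h2 | h2
        · have h3 : x * P δ A k y ≤ 0 :=
            mul_nonpos_of_nonpos_of_nonneg h1.le (P_nonneg _ _ _ _)
          have h4 : 0 ≤ y * P δ A k x := mul_nonneg h2 (P_nonneg _ _ _ _)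
          linarith
        · have hay : |y| ≤ |x| := by
            rw [abs_of_neg h1, abs_of_neg h2]; linarith
          have := P_anti δ A k hA hay
          nlinarith [P_nonneg δ A k x, P_nonneg δ A k y]
    nlinarith
end
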